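/- Let m, n ≥ 1 be integers and H ∈ C^m(ℝ^n) with ‖H‖_{L^∞(ℝ^n)} < ∞ and sup_{ω ∈ S^{n−1}} ‖(ω·∇)^m H‖_{L^∞(ℝ^n)} < ∞. Then there is a constant L_{m,n}, depending only on m, n, ‖H‖_{L^∞} and the directional derivative bound, such that for every x ∈ ℝ^n, |H(x)| ≤ L_{m,n} ( ∫_{Q_x} |H(ξ)|² dξ )^{m/(2m+n)}, where Q_x is the axis-parallel cube of side length 2 with corner x, oriented away from x in the sense that x·(ξ−x) ≥ 0 for all ξ ∈ Q_x. -/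

import Mathlib

/-!
For `v` in the cube of side `δ` at the origin oriented like `Q_x`, the identity
`Δ_v^m H(x) = ∑ₖ (-1)^(m-k) C(m,k) H(x + k v)` expresses `H(x)` through the values
`H(x + k v)`, `1 ≤ k ≤ m`, which lie in `Q_x` as soon as `m δ ≤ 2`, up to the error
`|Δ_v^m H(x)| ≤ ‖v‖^m sup_ω ‖(ω·∇)^m H‖_∞ ≲ δ^m`. Choosing `v` where the weighted sum of the
`|H(x + k v)|²` is at most its average over the cube and applying Cauchy–Schwarz gives
`|H(x)| ≲ δ^m + (δ^(-n) ∫_{Q_x} |H|²)^(1/2)`. The choice `δ = (∫_{Q_x} |H|²)^(1/(2m+n))`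
balances the two terms; when this `δ` exceeds `2/m`, the bound `|H| ≤ ‖H‖_∞` suffices.
-/

open MeasureTheory Finset Filter Topology
open scoped fwdDiff

theorem norm_le_norm_iterate_fwdDiff_add_sum {M G : Type*} [AddCommMonoid M]
    [SeminormedAddCommGroup G] (f : M → G) (h : M) (m : ℕ) (y : M) :
    ‖f y‖ ≤ ‖(Δ_[h])^[m] f y‖ + ∑ k ∈ range m, (m.choose (k + 1) : ℝ) * ‖f (y + (k + 1) • h)‖ := by
  have hsum := fwdDiff_iter_eq_sum_shift h f m y
  rw [sum_range_succ'] at hsum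
  have hfy : ‖f y‖ = ‖(Δ_[h])^[m] f y - ∑ k ∈ range m,
      ((-1 : ℤ) ^ (m - (k + 1)) * (m.choose (k + 1) : ℤ)) • f (y + (k + 1) • h)‖ := by
    rw [hsum, add_sub_cancel_left]
    rcases neg_one_pow_eq_or ℤ m with hpow | hpow <;> simp [hpow]
  rw [hfy]
  refine (norm_sub_le _ _).trans ?_
  gcongr
  refine (norm_sum_le _ _).trans (sum_le_sum fun k _ => (norm_zsmul_le _ _).trans_eq ?_)
  simp

section IteratedDerivatives

variable {E F : Type*} [NormedAddCommGroup E] [NormedSpace ℝ E]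
  [NormedAddCommGroup F] [NormedSpace ℝ F]

theorem ContinuousMultilinearMap.norm_apply_const_le_of_forall_norm_eq_one {m : ℕ} (hm : m ≠ 0)
    (f : ContinuousMultilinearMap ℝ (fun _ : Fin m => E) F) {C : ℝ}
    (hC : ∀ ω : E, ‖ω‖ = 1 → ‖f (fun _ => ω)‖ ≤ C) (v : E) :
    ‖f (fun _ => v)‖ ≤ C * ‖v‖ ^ m := by
  rcases eq_or_ne v 0 with rfl | hv
  · rw [f.map_coord_zero ⟨0, Nat.pos_of_ne_zero hm⟩ rfl, norm_zero, norm_zero,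
      zero_pow hm, mul_zero]
  · have hω : ‖‖v‖⁻¹ • v‖ = 1 := norm_smul_inv_norm hv
    have hsmul : (fun _ : Fin m => v) = fun _ => ‖v‖ • (‖v‖⁻¹ • v) := by
      simp [smul_smul, mul_inv_cancel₀ (norm_ne_zero_iff.2 hv)]
    rw [hsmul, f.map_smul_univ (fun _ => ‖v‖) (fun _ => ‖v‖⁻¹ • v)]
    simpa [norm_smul, mul_comm] using
      mul_le_mul_of_nonneg_left (hC _ hω) (pow_nonneg (norm_nonneg v) m)

variable {f : E → F} {j : ℕ}

theorem hasDerivAt_iteratedFDeriv_apply_add_smul (hf : ContDiff ℝ (j + 1) f) (y v : E) (t : ℝ) :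
    HasDerivAt (fun t : ℝ => iteratedFDeriv ℝ j f (y + t • v) (fun _ => v))
      (iteratedFDeriv ℝ (j + 1) f (y + t • v) (fun _ => v)) t := by
  have hline : HasDerivAt (fun t : ℝ => y + t • v) v t := by
    simpa using ((hasDerivAt_id t).smul_const v).const_add y
  have hD : HasDerivAt (fun t : ℝ => iteratedFDeriv ℝ j f (y + t • v))
      (fderiv ℝ (iteratedFDeriv ℝ j f) (y + t • v) v) t :=
    ((hf.differentiable_iteratedFDeriv (by exact_mod_cast j.lt_succ_self)) _).hasFDerivAt
      |>.comp_hasDerivAt t hline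
  rw [iteratedFDeriv_succ_apply_left]
  exact (ContinuousMultilinearMap.apply ℝ (fun _ : Fin j => E) F
    (fun _ => v)).hasFDerivAt.comp_hasDerivAt t hD

theorem norm_iteratedFDeriv_add_sub_le (hf : ContDiff ℝ (j + 1) f) {v : E} {C : ℝ}
    (hC : ∀ y, ‖iteratedFDeriv ℝ (j + 1) f y (fun _ => v)‖ ≤ C) (y : E) :
    ‖iteratedFDeriv ℝ j f (y + v) (fun _ => v) - iteratedFDeriv ℝ j f y (fun _ => v)‖ ≤ C := by
  simpa using norm_image_sub_le_of_norm_deriv_le_segment'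
    (fun t _ => (hasDerivAt_iteratedFDeriv_apply_add_smul hf y v t).hasDerivWithinAt)
    (fun t _ => hC _) 1 (Set.right_mem_Icc.2 zero_le_one)

theorem iteratedFDeriv_fwdDiff (hf : ContDiff ℝ j f) (v y : E) :
    iteratedFDeriv ℝ j (Δ_[v] f) y = iteratedFDeriv ℝ j f (y + v) - iteratedFDeriv ℝ j f y := by
  rw [← iteratedFDeriv_comp_add_right]
  exact iteratedFDeriv_sub_apply (hf.comp (contDiff_id.add contDiff_const)).contDiffAt
    hf.contDiffAt

theorem norm_iterate_fwdDiff_le (hf : ContDiff ℝ j f) {v : E} {C : ℝ}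
    (hC : ∀ y, ‖iteratedFDeriv ℝ j f y (fun _ => v)‖ ≤ C) (x : E) : ‖(Δ_[v])^[j] f x‖ ≤ C := by
  induction j generalizing f with
  | zero => simpa using hC x
  | succ j ih =>
    have hf' : ContDiff ℝ j f := hf.of_le (by exact_mod_cast j.le_succ)
    rw [Function.iterate_succ_apply]
    refine ih ((hf'.comp (contDiff_id.add contDiff_const)).sub hf') (fun y => ?_)
    rw [iteratedFDeriv_fwdDiff hf']
    exact norm_iteratedFDeriv_add_sub_le hf hC y

end IteratedDerivatives

theorem setIntegral_comp_add_smul_le {E : Type*} [NormedAddCommGroup E] [NormedSpace ℝ E]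
    [FiniteDimensional ℝ E] [MeasurableSpace E] [BorelSpace E] (μ : Measure E)
    [μ.IsAddHaarMeasure] {g : E → ℝ} (hg0 : 0 ≤ g) (hg : Integrable g μ) (x : E) {c : ℝ}
    (hc : 1 ≤ c) (s : Set E) : ∫ v in s, g (x + c • v) ∂μ ≤ ∫ w, g w ∂μ := by
  have hc0 : 0 < c := zero_lt_one.trans_le hc
  calc ∫ v in s, g (x + c • v) ∂μ ≤ ∫ v, g (x + c • v) ∂μ :=
        setIntegral_le_integral ((hg.comp_add_left x).comp_smul hc0.ne')
          (Eventually.of_forall fun v => hg0 (x + c • v))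
    _ = |(c ^ Module.finrank ℝ E)⁻¹| * ∫ w, g w ∂μ := by
        rw [Measure.integral_comp_smul μ (fun w => g (x + w)), integral_add_left_eq_self,
          smul_eq_mul]
    _ ≤ 1 * ∫ w, g w ∂μ := by
        gcongr
        · exact integral_nonneg hg0
        · rw [abs_of_nonneg (by positivity)]
          exact inv_le_one_of_one_le₀ (one_le_pow₀ hc)
    _ = ∫ w, g w ∂μ := one_mul _

theorem exists_mem_le_div_of_setIntegral_le {α : Type*} [MeasurableSpace α] {μ : Measure α}
    {s : Set α} {f : α → ℝ} {B : ℝ} (hs₀ : μ s ≠ 0) (hs : μ s ≠ ⊤) (hf : IntegrableOn f s μ)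
    (hB : ∫ a in s, f a ∂μ ≤ B) : ∃ a ∈ s, f a ≤ B / μ.real s := by
  obtain ⟨a, ha, hfa⟩ := exists_le_setAverage hs₀ hs hf
  refine ⟨a, ha, hfa.trans ?_⟩
  rw [setAverage_eq, smul_eq_mul, inv_mul_eq_div]
  gcongr

theorem EuclideanSpace.norm_le_sqrt_card_mul {ι : Type*} [Fintype ι] {v : EuclideanSpace ℝ ι}
    {a : ℝ} (hv : ∀ i, |v i| ≤ a) : ‖v‖ ≤ √(Fintype.card ι) * a := by
  rcases isEmpty_or_nonempty ι with _ | ⟨⟨i⟩⟩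
  · simp [Subsingleton.elim v 0]
  have ha : 0 ≤ a := (abs_nonneg _).trans (hv i)
  rw [EuclideanSpace.norm_eq, ← Real.sqrt_sq ha, ← Real.sqrt_mul (Nat.cast_nonneg _)]
  refine Real.sqrt_le_sqrt ?_
  calc ∑ i, ‖v i‖ ^ 2 ≤ ∑ _i : ι, a ^ 2 := sum_le_sum fun i _ => by
        rw [Real.norm_eq_abs]; exact pow_le_pow_left₀ (abs_nonneg _) (hv i) 2
    _ = Fintype.card ι * a ^ 2 := by simp

section CornerCube

variable {ι : Type*}

/-- The cube `Q_x` of the paper is `cornerCube x 2`. -/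
def cornerCube (x : EuclideanSpace ℝ ι) (ℓ : ℝ) : Set (EuclideanSpace ℝ ι) :=
  {ξ | ∀ i, ξ i ∈ if 0 ≤ x i then Set.Icc (x i) (x i + ℓ) else Set.Icc (x i - ℓ) (x i)}

theorem cornerCube_eq_preimage_pi (x : EuclideanSpace ℝ ι) (ℓ : ℝ) :
    cornerCube x ℓ = WithLp.ofLp ⁻¹' Set.univ.pi
      fun i => if 0 ≤ x i then Set.Icc (x i) (x i + ℓ) else Set.Icc (x i - ℓ) (x i) := by
  ext ξ; simp [cornerCube]

theorem isCompact_cornerCube [Fintype ι] (x : EuclideanSpace ℝ ι) (ℓ : ℝ) :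
    IsCompact (cornerCube x ℓ) := by
  rw [cornerCube_eq_preimage_pi]
  exact (PiLp.homeomorph ..).isCompact_preimage.2 <| isCompact_univ_pi fun i => by
    split_ifs <;> exact isCompact_Icc

theorem volume_cornerCube [Fintype ι] (x : EuclideanSpace ℝ ι) (ℓ : ℝ) :
    volume (cornerCube x ℓ) = ENNReal.ofReal ℓ ^ Fintype.card ι := by
  rw [cornerCube_eq_preimage_pi, (PiLp.volume_preserving_ofLp ι).measure_preimage
    (MeasurableSet.univ_pi fun i => by split_ifs <;> exact measurableSet_Icc).nullMeasurableSet,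
    volume_pi_pi]
  simp [apply_ite volume, Real.volume_Icc]

theorem add_smul_mem_cornerCube {x v : EuclideanSpace ℝ ι} {ℓ ℓ' c : ℝ}
    (hv : x + v ∈ cornerCube x ℓ) (hc : 0 ≤ c) (hcℓ : c * ℓ ≤ ℓ') :
    x + c • v ∈ cornerCube x ℓ' := by
  intro i
  have hvi := hv i
  simp only [PiLp.add_apply, PiLp.smul_apply, smul_eq_mul] at hvi ⊢
  split_ifs at hvi ⊢ with hx <;> simp only [Set.mem_Icc] at hvi ⊢ <;> constructor <;> nlinarith

theorem norm_le_of_add_mem_cornerCube [Fintype ι] {x v : EuclideanSpace ℝ ι} {ℓ : ℝ}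
    (hv : x + v ∈ cornerCube x ℓ) : ‖v‖ ≤ √(Fintype.card ι) * ℓ := by
  refine EuclideanSpace.norm_le_sqrt_card_mul fun i => ?_
  have hvi := hv i
  simp only [PiLp.add_apply] at hvi
  split_ifs at hvi <;> simp only [Set.mem_Icc] at hvi <;> rw [abs_le] <;> constructor <;> linarith

end CornerCube

theorem exists_add_mem_cornerCube_sum_sq_le {ι F : Type*} [Fintype ι] [NormedAddCommGroup F]
    {H : EuclideanSpace ℝ ι → F} (hH : Continuous H) (x : EuclideanSpace ℝ ι) {m : ℕ}
    {w : ℕ → ℝ} (hw : ∀ k, 0 ≤ w k) {δ : ℝ} (hδ : 0 < δ) (hmδ : m * δ ≤ 2) :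
    ∃ v, x + v ∈ cornerCube x δ ∧
      ∑ k ∈ range m, w k * ‖H (x + ((k + 1 : ℕ) : ℝ) • v)‖ ^ 2 ≤
        (∑ k ∈ range m, w k) * (∫ ξ in cornerCube x 2, ‖H ξ‖ ^ 2) / δ ^ Fintype.card ι := by
  set g := (cornerCube x 2).indicator fun ξ => ‖H ξ‖ ^ 2
  have hQ := isCompact_cornerCube x 2
  have hg : Integrable g := (integrable_indicator_iff hQ.measurableSet).2 <|
    (hH.norm.pow 2).continuousOn.integrableOn_compact hQ
  have hg0 : 0 ≤ g := Set.indicator_nonneg fun _ _ => sq_nonneg _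
  set V := (x + ·) ⁻¹' cornerCube x δ
  have hV : volume V = ENNReal.ofReal δ ^ Fintype.card ι := by
    rw [measure_preimage_add, volume_cornerCube]
  have hscale : ∀ k ∈ range m, ∀ v ∈ V, x + ((k + 1 : ℕ) : ℝ) • v ∈ cornerCube x 2 := by
    intro k hk v hv
    refine add_smul_mem_cornerCube hv (Nat.cast_nonneg _) (le_trans ?_ hmδ)
    gcongr
    exact_mod_cast mem_range.1 hk
  have hGint : ∀ k, Integrable fun v => w k * g (x + ((k + 1 : ℕ) : ℝ) • v) := fun k =>
    ((hg.comp_add_left x).comp_smul (Nat.cast_ne_zero.2 k.succ_ne_zero)).const_mul _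
  obtain ⟨v, hv, hGv⟩ := exists_mem_le_div_of_setIntegral_le (μ := volume) (s := V)
    (f := fun v => ∑ k ∈ range m, w k * g (x + ((k + 1 : ℕ) : ℝ) • v))
    (B := (∑ k ∈ range m, w k) * ∫ ξ in cornerCube x 2, ‖H ξ‖ ^ 2)
    (by simp [hV, hδ]) (by simp [hV])
    (integrable_finsetSum _ fun k _ => hGint k).integrableOn <| by
      rw [integral_finsetSum _ fun k _ => (hGint k).integrableOn, sum_mul]
      refine sum_le_sum fun k _ => ?_
      rw [integral_const_mul, ← integral_indicator hQ.measurableSet]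
      exact mul_le_mul_of_nonneg_left
        (setIntegral_comp_add_smul_le volume hg0 hg x (by simp) V) (hw k)
  refine ⟨v, hv, ?_⟩
  rw [measureReal_def, hV, ENNReal.toReal_pow, ENNReal.toReal_ofReal hδ.le] at hGv
  convert hGv using 2 with k hk
  simp only [g, Set.indicator_of_mem (hscale k hk v hv)]

theorem norm_le_add_sqrt_integral_sq_cornerCube {ι F : Type*} [Fintype ι] [NormedAddCommGroup F]
    {H : EuclideanSpace ℝ ι → F} (hH : Continuous H) (x : EuclideanSpace ℝ ι) {m : ℕ} {K : ℝ}
    (hK : 0 ≤ K) (hΔ : ∀ v, ‖(Δ_[v])^[m] H x‖ ≤ K * ‖v‖ ^ m) {δ : ℝ} (hδ : 0 < δ)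
    (hmδ : m * δ ≤ 2) :
    ‖H x‖ ≤ K * √(Fintype.card ι) ^ m * δ ^ m + (∑ k ∈ range m, (m.choose (k + 1) : ℝ)) *
      √((∫ ξ in cornerCube x 2, ‖H ξ‖ ^ 2) / δ ^ Fintype.card ι) := by
  set A := ∑ k ∈ range m, (m.choose (k + 1) : ℝ)
  set J := (∫ ξ in cornerCube x 2, ‖H ξ‖ ^ 2) / δ ^ Fintype.card ι
  obtain ⟨v, hv, hsum⟩ := exists_add_mem_cornerCube_sum_sq_le hH x
    (w := fun k => (m.choose (k + 1) : ℝ)) (fun k => Nat.cast_nonneg _) hδ hmδ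
  have hA : 0 ≤ A := sum_nonneg fun k _ => Nat.cast_nonneg _
  have hdiff : ‖(Δ_[v])^[m] H x‖ ≤ K * √(Fintype.card ι) ^ m * δ ^ m := by
    refine (hΔ v).trans ?_
    rw [mul_assoc, ← mul_pow]
    gcongr
    exact norm_le_of_add_mem_cornerCube hv
  have hCS : ∑ k ∈ range m, (m.choose (k + 1) : ℝ) * ‖H (x + ((k + 1 : ℕ) : ℝ) • v)‖ ≤
      A * √J := by
    calc _ ≤ √(A * (A * J)) := (le_abs_self _).trans <| Real.abs_le_sqrt <|
          (sum_sq_le_sum_mul_sum_of_sq_le_mul _ (f := fun k => (m.choose (k + 1) : ℝ))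
            (g := fun k => (m.choose (k + 1) : ℝ) * ‖H (x + ((k + 1 : ℕ) : ℝ) • v)‖ ^ 2)
            (fun k _ => Nat.cast_nonneg _) (fun k _ => by positivity)
            (fun k _ => (by ring : _ = _).le)).trans <| by
              rw [← mul_div_assoc]; exact mul_le_mul_of_nonneg_left hsum hA
      _ = A * √J := by
        rw [← mul_assoc, Real.sqrt_mul (mul_self_nonneg A), Real.sqrt_mul_self hA]
  have hsplit := norm_le_norm_iterate_fwdDiff_add_sum H v m x
  simp only [← Nat.cast_smul_eq_nsmul ℝ] at hsplit
  linarith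

theorem le_mul_rpow_of_forall_le_add_sqrt {m n : ℕ} (hm : m ≠ 0) {a M K A δ₀ I : ℝ}
    (ha : 0 ≤ a) (hK : 0 ≤ K) (hA : 0 ≤ A) (hδ₀ : 0 < δ₀) (hI : 0 ≤ I) (haM : a ≤ M)
    (h : ∀ δ, 0 < δ → δ ≤ δ₀ → a ≤ K * δ ^ m + A * √(I / δ ^ n)) :
    a ≤ (K + A + M / δ₀ ^ m) * I ^ ((m : ℝ) / (2 * m + n)) := by
  have hd : (0 : ℝ) < 2 * m + n := by positivity
  rcases hI.eq_or_lt with rfl | hIpos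
  · rw [Real.zero_rpow (by positivity), mul_zero]
    have hlim : Tendsto (fun δ : ℝ => K * δ ^ m) (𝓝[>] 0) (𝓝 0) := by
      have := ((continuous_pow m).tendsto (0 : ℝ)).const_mul K |>.mono_left
        (nhdsWithin_le_nhds (s := Set.Ioi 0))
      rwa [zero_pow hm, mul_zero] at this
    refine ge_of_tendsto hlim ?_
    filter_upwards [Ioc_mem_nhdsGT hδ₀] with δ hδ
    simpa using h δ hδ.1 hδ.2
  set P := I ^ ((m : ℝ) / (2 * m + n))
  set r := I ^ (1 / (2 * m + n : ℝ))
  have hP : 0 < P := by positivity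
  have hr : 0 < r := by positivity
  have hrm : r ^ m = P := by
    rw [← Real.rpow_natCast, ← Real.rpow_mul hI]
    congr 1
    field_simp
  have hIr : I / r ^ n = P ^ 2 := by
    rw [div_eq_iff (by positivity), ← hrm, ← pow_mul, ← pow_add, ← Real.rpow_natCast,
      ← Real.rpow_mul hI]
    push_cast
    rw [show 1 / (2 * m + n : ℝ) * (m * 2 + n) = 1 by field_simp, Real.rpow_one]
  have hM : 0 ≤ M / δ₀ ^ m := div_nonneg (ha.trans haM) (by positivity)
  by_cases hrδ : r ≤ δ₀
  · calc a ≤ K * r ^ m + A * √(I / r ^ n) := h r hr hrδ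
      _ = (K + A) * P := by rw [hrm, hIr, Real.sqrt_sq hP.le]; ring
      _ ≤ (K + A + M / δ₀ ^ m) * P :=
        mul_le_mul_of_nonneg_right (le_add_of_nonneg_right hM) hP.le
  · calc a ≤ M / δ₀ ^ m * δ₀ ^ m := by rw [div_mul_cancel₀ _ (by positivity)]; exact haM
      _ ≤ M / δ₀ ^ m * P := by rw [← hrm]; gcongr; exact (not_le.1 hrδ).le
      _ ≤ (K + A + M / δ₀ ^ m) * P := mul_le_mul_of_nonneg_right (by linarith) hP.le

theorem pointwise_from_local_L2_dimension_n_general (m n : ℕ) (hm : 1 ≤ m)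
    (H : EuclideanSpace ℝ (Fin n) → ℂ) (hH : ContDiff ℝ (m : ℕ∞) H) (M0 Mm : ℝ)
    (hbdd : ∀ x, ‖H x‖ ≤ M0)
    (hdir : ∀ ω : EuclideanSpace ℝ (Fin n), ‖ω‖ = 1 →
      ∀ x, ‖iteratedFDeriv ℝ m H x (fun _ => ω)‖ ≤ Mm) :
    ∃ L : ℝ, ∀ x : EuclideanSpace ℝ (Fin n),
      ‖H x‖ ≤
        L * (∫ ξ in {ξ : EuclideanSpace ℝ (Fin n) |
              ∀ i, ξ i ∈ (if 0 ≤ x i then Set.Icc (x i) (x i + 2)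
                else Set.Icc (x i - 2) (x i))}, ‖H ξ‖ ^ 2) ^ ((m : ℝ) / (2 * m + n)) := by
  set K := max Mm 0
  have hΔ : ∀ v x, ‖(Δ_[v])^[m] H x‖ ≤ K * ‖v‖ ^ m := fun v =>
    norm_iterate_fwdDiff_le (by exact_mod_cast hH) fun y =>
      (iteratedFDeriv ℝ m H y).norm_apply_const_le_of_forall_norm_eq_one (by omega)
        (fun ω hω => (hdir ω hω y).trans (le_max_left _ _)) v
  have hm0 : (0 : ℝ) < m := by exact_mod_cast hm
  refine ⟨K * √n ^ m + ∑ k ∈ range m, (m.choose (k + 1) : ℝ) + M0 / (2 / m) ^ m, fun x => ?_⟩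
  refine le_mul_rpow_of_forall_le_add_sqrt (by omega) (norm_nonneg _) (by positivity)
    (sum_nonneg fun _ _ => Nat.cast_nonneg _) (by positivity)
    (setIntegral_nonneg_of_ae_restrict (Eventually.of_forall fun _ => sq_nonneg _)) (hbdd x)
    fun δ hδ hδm => ?_
  have := norm_le_add_sqrt_integral_sq_cornerCube hH.continuous x (le_max_right _ _) (hΔ · x) hδ
    ((le_div_iff₀' hm0).1 hδm)
  rwa [Fintype.card_fin] at this

/-- Pointwise bounds from local `L²` bounds in `ℝ^n`: for `H ∈ C^m(ℝ^n)` with bounded sup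
norm and bounded `m`-th directional derivatives, there is a constant `L_{m,n}` such that
`|H(x)| ≤ L_{m,n} (∫_{Q_x} |H(ξ)|² dξ)^{m/(2m+n)}` where `Q_x` is the axis-parallel cube
of side length `2` with corner `x` oriented away from `x`. -/
theorem pointwise_from_local_L2_dimension_n (m n : ℕ) (hm : 1 ≤ m) (hn : 1 ≤ n)
    (H : EuclideanSpace ℝ (Fin n) → ℂ) (hH : ContDiff ℝ (m : ℕ∞) H) (M0 Mm : ℝ)
    (hbdd : ∀ x, ‖H x‖ ≤ M0)
    (hdir : ∀ ω : EuclideanSpace ℝ (Fin n), ‖ω‖ = 1 →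
      ∀ x, ‖iteratedFDeriv ℝ m H x (fun _ => ω)‖ ≤ Mm) :
    ∃ L : ℝ, ∀ x : EuclideanSpace ℝ (Fin n),
      ‖H x‖ ≤
        L * (∫ ξ in {ξ : EuclideanSpace ℝ (Fin n) |
              ∀ i, ξ i ∈ (if 0 ≤ x i then Set.Icc (x i) (x i + 2)
                else Set.Icc (x i - 2) (x i))}, ‖H ξ‖ ^ 2) ^ ((m : ℝ) / (2 * m + n)) :=
  pointwise_from_local_L2_dimension_n_general m n hm H hH M0 Mm hbdd hdir
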